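/- Let G be a finite connected bridgeless graph and let z be an integer such that every isometric cycle of G has length at most z. Then every edge of G is contained in a cycle of length at most z. (Equivalently, η(G) ≤ ζ(G), where η(G) is the least integer such that every edge lies in a cycle of length at most η(G) and ζ(G) is the length of a largest isometric cycle.) -/

import Mathlib

/-! A shortest cycle `C` through an edge `e` is isometric. Otherwise some geodesic `Q` between
two vertices of `C` is shorter than both arcs of `C` joining them; replacing one of the arcs by `Q`
gives a closed walk shorter than `C` that still uses `e` exactly once, and such a walk contains a
cycle through `e` no longer than itself. -/

open SimpleGraph Finset

variable {V : Type*}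

/-- `o` is an orientation of `G`: each edge of `G` gets exactly one direction. -/
def IsOrientation (G : SimpleGraph V) (o : V → V → Prop) : Prop :=
  (∀ x y, o x y → G.Adj x y) ∧ (∀ x y, G.Adj x y → (o x y ∨ o y x)) ∧
    (∀ x y, o x y → ¬ o y x)

/-- There is a directed path (with respect to `o`) from `x` to `y` of length at most `n`. -/
def DPathLE (o : V → V → Prop) (n : ℕ) (x y : V) : Prop :=
  ∃ m ≤ n, ∃ f : ℕ → V, f 0 = x ∧ f m = y ∧ (∀ i < m, o (f i) (f (i + 1))) ∧
    (∀ i ≤ m, ∀ j ≤ m, f i = f j → i = j)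

/-- `G` admits an orientation of radius at most `R`. -/
def OrientRadiusLE (G : SimpleGraph V) (R : ℕ) : Prop :=
  ∃ o : V → V → Prop, IsOrientation G o ∧
    ∃ u : V, ∀ v : V, DPathLE o R u v ∧ DPathLE o R v u

/-- `G` admits an orientation of diameter at most `D`. -/
def OrientDiamLE (G : SimpleGraph V) (D : ℕ) : Prop :=
  ∃ o : V → V → Prop, IsOrientation G o ∧ ∀ x y : V, DPathLE o D x y

/-- The edge `e` lies on a cycle of `G` of length at most `n`. -/
def InCycleLE (G : SimpleGraph V) (e : Sym2 V) (n : ℕ) : Prop :=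
  ∃ (v : V) (c : G.Walk v v), c.IsCycle ∧ e ∈ c.edges ∧ c.length ≤ n

/-- `G` is bridgeless: no edge is a cut edge. -/
def Bridgeless (G : SimpleGraph V) : Prop :=
  ∀ e ∈ G.edgeSet, ¬ G.IsBridge e

/-- `c` is a rainbow `k`-edge-coloring of `G`: every two distinct vertices are joined
by a path whose edges receive pairwise distinct colors. -/
def IsRainbowColoring (G : SimpleGraph V) (k : ℕ) (c : Sym2 V → Fin k) : Prop :=
  ∀ x y : V, x ≠ y → ∃ p : G.Walk x y, p.IsPath ∧ (p.edges.map c).Nodup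

/-- The rainbow connection number of `G` is at most `k`. -/
def RcLE (G : SimpleGraph V) (k : ℕ) : Prop :=
  ∃ c : Sym2 V → Fin k, IsRainbowColoring G k c

/-- A cycle `C` (as a closed walk) of `G` is isometric if the distance between any two of
its vertices measured in the cycle (i.e. in the subgraph formed by the cycle) equals their
distance in `G`. -/
def IsIsometricCycle (G : SimpleGraph V) {v : V} (C : G.Walk v v) : Prop :=
  C.IsCycle ∧ ∀ x ∈ C.support, ∀ y ∈ C.support,
    C.toSubgraph.spanningCoe.dist x y = G.dist x y

namespace SimpleGraph

variable {G : SimpleGraph V}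

def Walk.IsShortestCycleThrough {v : V} (C : G.Walk v v) (e : Sym2 V) : Prop :=
  C.IsCycle ∧ e ∈ C.edges ∧ ∀ n, InCycleLE G e n → C.length ≤ n

namespace Walk

lemma exists_eq_append_cons_of_mem_darts {a b : V} (p : G.Walk a b) {d : G.Dart}
    (hd : d ∈ p.darts) :
    ∃ (q : G.Walk a d.fst) (r : G.Walk d.snd b), p = q.append (cons d.adj r) := by
  induction p with
  | nil => simp at hd
  | cons h p ih =>
    rcases List.mem_cons.mp hd with rfl | hd
    · exact ⟨nil, p, rfl⟩
    · obtain ⟨q, r, rfl⟩ := ih hd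
      exact ⟨cons h q, r, rfl⟩

/-- The rest of the walk joins the ends of `e` without using `e`; shortening it to a path closes
a cycle through `e`. -/
lemma inCycleLE_of_count_edges_eq_one [DecidableEq V] {x : V} (W : G.Walk x x) {e : Sym2 V}
    (he : W.edges.count e = 1) : InCycleLE G e W.length := by
  obtain ⟨d, hd, rfl⟩ := List.mem_map.mp (List.count_pos_iff.mp (he ▸ Nat.one_pos))
  obtain ⟨q, r, rfl⟩ := W.exists_eq_append_cons_of_mem_darts hd
  set R : G.Walk d.snd d.fst := r.append q
  have hR : d.edge ∉ R.edges := by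
    have hsplit : (q.append (cons d.adj r)).edges = q.edges ++ d.edge :: r.edges := by
      rw [edges_append, edges_cons]; rfl
    rw [hsplit, List.count_append, List.count_cons_self] at he
    simp only [R, edges_append, List.count_append, ← List.count_pos_iff]
    omega
  refine ⟨d.fst, cons d.adj R.toPath, Path.cons_isCycle _ _ fun h ↦ hR ?_, by simp [Dart.edge], ?_⟩
  · exact R.edges_toPath_subset_edges h
  · have : (R.toPath : G.Walk d.snd d.fst).length ≤ R.length := R.length_bypass_le_length
    simp only [length_cons, length_append, R] at this ⊢
    omega

lemma exists_append_edges_perm [DecidableEq V] {v x y : V} (C : G.Walk v v)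
    (hx : x ∈ C.support) (hy : y ∈ C.support) :
    ∃ (A₁ : G.Walk x y) (A₂ : G.Walk y x), (A₁.append A₂).edges.Perm C.edges := by
  have hy' : y ∈ (C.rotate x hx).support := (C.mem_support_rotate_iff x hx).mpr hy
  exact ⟨_, _, (take_spec _ hy').symm ▸ (C.rotate_edges x hx).perm⟩

/-- Since the trail `Q` uses `e` at most once, one of `Q ++ A₂` and `A₁ ++ Q⁻¹` uses it
exactly once. -/
lemma exists_count_edges_eq_one_of_shortcut [DecidableEq V] {x y : V} {e : Sym2 V}
    (A₁ : G.Walk x y) (A₂ : G.Walk y x) (Q : G.Walk x y)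
    (hA : (A₁.append A₂).edges.count e = 1) (hQ : Q.IsTrail)
    (hQ₁ : Q.length < A₁.length) (hQ₂ : Q.length < A₂.length) :
    ∃ W : G.Walk x x, W.edges.count e = 1 ∧ W.length < A₁.length + A₂.length := by
  have hQe : Q.edges.count e ≤ 1 := List.nodup_iff_count_le_one.mp hQ.edges_nodup e
  rw [edges_append, List.count_append] at hA
  by_cases h : Q.edges.count e + A₂.edges.count e = 1
  · exact ⟨Q.append A₂, by rwa [edges_append, List.count_append], by simp; omega⟩
  · refine ⟨A₁.append Q.reverse, ?_, by simp; omega⟩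
    rw [edges_append, List.count_append, edges_reverse, List.count_reverse]
    omega

lemma exists_walk_toSubgraph_spanningCoe {v x y : V} (C : G.Walk v v) (A : G.Walk x y)
    (hA : A.edges ⊆ C.edges) :
    ∃ B : C.toSubgraph.spanningCoe.Walk x y, B.length = A.length := by
  have hsub : ∀ f ∈ A.edges, f ∈ C.toSubgraph.spanningCoe.edgeSet := fun f hf ↦ by
    rw [Subgraph.edgeSet_spanningCoe]
    exact (mem_edges_toSubgraph C).mpr (hA hf)
  exact ⟨A.transfer _ hsub, length_transfer _ _⟩

end Walk

lemma exists_isShortestCycleThrough {e : Sym2 V} (he : e ∈ G.edgeSet) (hbr : ¬ G.IsBridge e) :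
    ∃ (v : V) (C : G.Walk v v), C.IsShortestCycleThrough e := by
  classical
  have hex : ∃ n, InCycleLE G e n := by
    rw [isBridge_iff_forall_cycle_notMem he] at hbr
    push Not at hbr
    obtain ⟨v, C, hC, heC⟩ := hbr
    exact ⟨C.length, v, C, hC, heC, le_rfl⟩
  obtain ⟨v, C, hC, heC, hlen⟩ := Nat.find_spec hex
  exact ⟨v, C, hC, heC, fun n hn ↦ hlen.trans (Nat.find_min' hex hn)⟩

theorem Walk.IsShortestCycleThrough.isIsometricCycle {v : V} {C : G.Walk v v} {e : Sym2 V}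
    (hC : C.IsShortestCycleThrough e) : IsIsometricCycle G C := by
  classical
  obtain ⟨hcyc, he, hmin⟩ := hC
  refine ⟨hcyc, fun x hx y hy ↦ ?_⟩
  obtain ⟨A₁, A₂, hA⟩ := C.exists_append_edges_perm hx hy
  have hA₁ : A₁.edges ⊆ C.edges := fun f hf ↦ hA.subset (by simp [hf])
  have hA₂ : A₂.edges ⊆ C.edges := fun f hf ↦ hA.subset (by simp [hf])
  obtain ⟨B₁, hB₁⟩ := C.exists_walk_toSubgraph_spanningCoe A₁ hA₁
  obtain ⟨B₂, hB₂⟩ := C.exists_walk_toSubgraph_spanningCoe A₂.reverse (by simpa using hA₂)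
  have hGH : G.dist x y ≤ C.toSubgraph.spanningCoe.dist x y :=
    Reachable.dist_anti (Subgraph.spanningCoe_le _) ⟨B₁⟩
  refine (hGH.lt_or_eq.resolve_left fun hlt ↦ ?_).symm
  obtain ⟨Q, hQ, hQlen⟩ := A₁.reachable.exists_path_of_dist
  have hB₁le := dist_le B₁
  have hB₂le := dist_le B₂
  rw [length_reverse] at hB₂
  have hAe : (A₁.append A₂).edges.count e = 1 := hA.count_eq e ▸ hcyc.isTrail.count_edges_eq_one he
  obtain ⟨W, hW, hWlen⟩ :=
    exists_count_edges_eq_one_of_shortcut A₁ A₂ Q hAe hQ.isTrail (by omega) (by omega)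
  have hClen : C.length = A₁.length + A₂.length := by
    simpa using hA.length_eq.symm
  have := hmin _ (W.inCycleLE_of_count_edges_eq_one hW)
  omega

end SimpleGraph

theorem eta_le_zeta_general (G : SimpleGraph V)
    (hbl : Bridgeless G) (z : ℕ)
    (hz : ∀ (v : V) (C : G.Walk v v), IsIsometricCycle G C → C.length ≤ z) :
    ∀ e ∈ G.edgeSet, InCycleLE G e z := by
  intro e he
  obtain ⟨v, C, hC⟩ := exists_isShortestCycleThrough he (hbl e he)
  exact ⟨v, C, hC.1, hC.2.1, hz v C hC.isIsometricCycle⟩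

/-- If every isometric cycle of a connected bridgeless graph `G` has length
at most `z`, then every edge of `G` lies on a cycle of length at most `z` (i.e. η(G) ≤ ζ(G)). -/
theorem eta_le_zeta [Fintype V] (G : SimpleGraph V)
    (hconn : G.Connected) (hbl : Bridgeless G) (z : ℕ)
    (hz : ∀ (v : V) (C : G.Walk v v), IsIsometricCycle G C → C.length ≤ z) :
    ∀ e ∈ G.edgeSet, InCycleLE G e z :=
  eta_le_zeta_general G hbl z hz
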